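/- arXiv:1206.5727 — 3 statements merged into one kernel-verified Lean document; each statement's English description precedes it below -/
import Mathlib

section
/- Let S : ℕ → ℝ be a function on positive integers satisfying S(M·N) = S(M) + S(N) for all M, N ≥ 1, and S(M) > S(N) whenever M > N. Then there exists a constant k > 0 such that S(N) = k · log N for all N ≥ 1. -/
/-- Boltzmann–Planck formula: a function on positive integers that is additive under
multiplication and strictly monotone must be a positive multiple of the logarithm. -/
theorem boltzmann_planck (S : ℕ → ℝ)
    (hmul : ∀ M N : ℕ, 1 ≤ M → 1 ≤ N → S (M * N) = S M + S N)
    (hmono : ∀ M N : ℕ, 1 ≤ N → N < M → S N < S M) :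
    ∃ k : ℝ, 0 < k ∧ ∀ N : ℕ, 1 ≤ N → S N = k * Real.log N := by
  have h1 : S 1 = 0 := by
    have := hmul 1 1 le_rfl le_rfl
    simp at this; linarith
  have hS2 : 0 < S 2 := by
    have := hmono 2 1 le_rfl one_lt_two
    linarith
  have hle : ∀ M N : ℕ, 1 ≤ N → N ≤ M → S N ≤ S M := by
    intro M N hN h
    rcases h.lt_or_eq with h | h
    · exact (hmono M N hN h).le
    · rw [h]
  have hpow : ∀ N : ℕ, 1 ≤ N → ∀ m : ℕ, S (N ^ m) = m * S N := by
    intro N hN m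
    induction m with
    | zero => simpa using h1
    | succ m ih =>
      rw [pow_succ, hmul _ _ (Nat.one_le_pow _ _ hN) hN, ih]
      push_cast; ring
  have hlog2 : (0:ℝ) < Real.log 2 := Real.log_pos one_lt_two
  set k := S 2 / Real.log 2 with hk
  have hkpos : 0 < k := div_pos hS2 hlog2
  have hklog2 : k * Real.log 2 = S 2 := div_mul_cancel₀ _ hlog2.ne'
  refine ⟨k, hkpos, ?_⟩
  intro N hN
  rcases eq_or_lt_of_le hN with h | hN2
  · simp [← h, h1]
  have hN2 : 2 ≤ N := hN2
  have key : ∀ m : ℕ, 1 ≤ m → |S N - k * Real.log N| ≤ S 2 / m := by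
    intro m hm
    set n := Nat.log 2 (N ^ m) with hn
    have hNm : N ^ m ≠ 0 := by positivity
    have h₁ : 2 ^ n ≤ N ^ m := Nat.pow_log_le_self 2 hNm
    have h₂ : N ^ m < 2 ^ (n + 1) := Nat.lt_pow_succ_log_self one_lt_two _
    have hs₁ : (n : ℝ) * S 2 ≤ m * S N := by
      rw [← hpow 2 one_le_two n, ← hpow N hN m]
      exact hle _ _ Nat.one_le_two_pow h₁
    have hs₂ : (m : ℝ) * S N ≤ ((n : ℝ) + 1) * S 2 := by
      have := hle _ _ (Nat.one_le_pow _ _ (by omega : 0 < N)) h₂.le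
      rw [hpow 2 one_le_two (n+1), hpow N hN m] at this
      push_cast at this
      linarith
    have hl₁ : (n : ℝ) * Real.log 2 ≤ (m : ℝ) * Real.log N := by
      have h' : Real.log ((2:ℝ) ^ n) ≤ Real.log ((N:ℝ) ^ m) := by
        apply Real.log_le_log (by positivity)
        exact_mod_cast h₁
      simpa [Real.log_pow] using h'
    have hl₂ : (m : ℝ) * Real.log N ≤ ((n : ℝ) + 1) * Real.log 2 := by
      have h' : Real.log ((N:ℝ) ^ m) ≤ Real.log ((2:ℝ) ^ (n + 1)) := by
        apply Real.log_le_log (by positivity)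
        exact_mod_cast h₂.le
      rw [Real.log_pow, Real.log_pow] at h'
      push_cast at h'
      linarith
    have hkl₁ : k * ((n : ℝ) * Real.log 2) ≤ k * ((m : ℝ) * Real.log N) :=
      mul_le_mul_of_nonneg_left hl₁ hkpos.le
    have hkl₂ : k * ((m : ℝ) * Real.log N) ≤ k * (((n : ℝ) + 1) * Real.log 2) :=
      mul_le_mul_of_nonneg_left hl₂ hkpos.le
    have e1 : k * ((n : ℝ) * Real.log 2) = (n : ℝ) * S 2 := by rw [← hklog2]; ring
    have e2 : k * (((n : ℝ) + 1) * Real.log 2) = ((n : ℝ) + 1) * S 2 := by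
      rw [← hklog2]; ring
    have hmpos : (0:ℝ) < m := by exact_mod_cast hm
    rw [le_div_iff₀ hmpos]
    have habs : |(m : ℝ) * (S N - k * Real.log N)| ≤ S 2 := by
      rw [abs_le]
      constructor <;> nlinarith
    calc |S N - k * Real.log N| * m = |(m : ℝ) * (S N - k * Real.log N)| := by
          rw [abs_mul, abs_of_pos hmpos]; ring
      _ ≤ S 2 := habs
  have hzero : S N - k * Real.log N = 0 := by
    by_contra h
    have hx : 0 < |S N - k * Real.log N| := abs_pos.mpr h
    obtain ⟨m, hm⟩ := exists_nat_gt (S 2 / |S N - k * Real.log N|)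
    have hm1 : 1 ≤ m := by
      by_contra h'
      push_neg at h'
      interval_cases m
      simp at hm
      nlinarith [div_pos hS2 hx]
    have h2 : S 2 / m < |S N - k * Real.log N| := by
      rw [div_lt_iff₀ (by exact_mod_cast hm1 : (0:ℝ) < m)]
      rw [div_lt_iff₀ hx] at hm
      nlinarith
    exact absurd (key m hm1) (not_le.mpr h2)
  linarith
end

section
/- Let S : ℕ → ℝ satisfy S(N^n) = n·S(N) for all N, n ≥ 1 and be strictly monotone increasing. Fix N ≥ 2, and for each n let m(n) be the unique natural number with 2^(m(n)) ≤ N^n < 2^(m(n)+1). Then lim_{n→∞} m(n)/n = log N / log 2, and consequently S(N) = S(2) · (log N / log 2). -/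
open Filter Topology

/-!
Every `f : ℕ → ℝ` that is strictly increasing on the positive integers and turns powers into
multiples, `f (a ^ k) = k * f a`, sends the bracket `2 ^ m ≤ N ^ n < 2 ^ (m + 1)` to
`m ≤ n * (f N / f 2) < m + 1`. Hence `m n = ⌊n * (f N / f 2)⌋₊` and `m n / n → f N / f 2`.
Both `S` and `log` are such functions, so the two limits coincide.
-/

theorem tendsto_div_of_floor_bracket {a : ℝ} {m : ℕ → ℕ}
    (h : ∀ n : ℕ, (m n : ℝ) ≤ n * a ∧ n * a < m n + 1) :
    Tendsto (fun n : ℕ => (m n : ℝ) / n) atTop (𝓝 a) := by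
  have ha : 0 ≤ a := by simpa using (Nat.cast_nonneg _).trans (h 1).1
  have hm : m = fun n : ℕ => ⌊a * n⌋₊ := funext fun n =>
    ((Nat.floor_eq_iff (by positivity)).2 (by rw [mul_comm]; exact h n)).symm
  subst hm
  exact (tendsto_nat_floor_mul_div_atTop ha).comp tendsto_natCast_atTop_atTop

theorem apply_pow_eq_mul_of_one_le_exponent {f : ℕ → ℝ}
    (hpow : ∀ a k : ℕ, 1 ≤ a → 1 ≤ k → f (a ^ k) = k * f a) (a k : ℕ) (ha : 1 ≤ a) :
    f (a ^ k) = k * f a := by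
  rcases Nat.eq_zero_or_pos k with rfl | hk
  · have h1 : f 1 = 2 * f 1 := by simpa using hpow 1 2 le_rfl one_le_two
    simp only [pow_zero, Nat.cast_zero, zero_mul]
    linarith
  · exact hpow a k ha hk

theorem apply_two_pos {f : ℕ → ℝ} (hpow : ∀ a k : ℕ, 1 ≤ a → f (a ^ k) = k * f a)
    (hmono : StrictMonoOn f (Set.Ici 1)) : 0 < f 2 := by
  have h1 : f 1 = 0 := by simpa using hpow 1 0 le_rfl
  exact h1 ▸ hmono (Set.mem_Ici.2 le_rfl) (Set.mem_Ici.2 one_le_two) one_lt_two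

theorem le_mul_div_lt_of_pow_bracket {f : ℕ → ℝ}
    (hpow : ∀ a k : ℕ, 1 ≤ a → f (a ^ k) = k * f a) (hmono : StrictMonoOn f (Set.Ici 1))
    {N m n : ℕ} (hN : 1 ≤ N) (h : 2 ^ m ≤ N ^ n ∧ N ^ n < 2 ^ (m + 1)) :
    (m : ℝ) ≤ n * (f N / f 2) ∧ n * (f N / f 2) < m + 1 := by
  have h2 := apply_two_pos hpow hmono
  have lower : f (2 ^ m) ≤ f (N ^ n) :=
    hmono.monotoneOn Nat.one_le_two_pow (Nat.one_le_pow _ _ hN) h.1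
  have upper : f (N ^ n) < f (2 ^ (m + 1)) :=
    hmono (Nat.one_le_pow _ _ hN) Nat.one_le_two_pow h.2
  rw [hpow _ _ one_le_two, hpow _ _ hN] at lower upper
  push_cast at upper
  rw [mul_div_assoc', le_div_iff₀ h2, div_lt_iff₀ h2]
  constructor <;> linarith

theorem tendsto_div_of_pow_bracket {f : ℕ → ℝ}
    (hpow : ∀ a k : ℕ, 1 ≤ a → f (a ^ k) = k * f a) (hmono : StrictMonoOn f (Set.Ici 1))
    {N : ℕ} (hN : 1 ≤ N) {m : ℕ → ℕ}
    (hm : ∀ n : ℕ, 2 ^ m n ≤ N ^ n ∧ N ^ n < 2 ^ (m n + 1)) :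
    Tendsto (fun n : ℕ => (m n : ℝ) / n) atTop (𝓝 (f N / f 2)) :=
  tendsto_div_of_floor_bracket fun n => le_mul_div_lt_of_pow_bracket hpow hmono hN (hm n)

theorem strictMonoOn_log_natCast : StrictMonoOn (fun a : ℕ => Real.log a) (Set.Ici 1) :=
  fun a ha _ _ hab => Real.log_lt_log (Nat.cast_pos.2 ha) (by exact_mod_cast hab)

/-- Squeeze argument: comparing powers of `N` with powers of `2`, extensivity
`S(N^n) = n·S(N)` and strict monotonicity pin down `S(N)` from `S(2)`. -/
theorem squeeze_calibration (S : ℕ → ℝ)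
    (hpow : ∀ N n : ℕ, 1 ≤ N → 1 ≤ n → S (N ^ n) = n * S N)
    (hmono : StrictMono S)
    (N : ℕ) (hN : 2 ≤ N)
    (m : ℕ → ℕ) (hm : ∀ n : ℕ, 2 ^ (m n) ≤ N ^ n ∧ N ^ n < 2 ^ (m n + 1)) :
    Tendsto (fun n : ℕ => (m n : ℝ) / n) atTop (nhds (Real.log N / Real.log 2)) ∧
      S N = S 2 * (Real.log N / Real.log 2) := by
  have hN1 : 1 ≤ N := one_le_two.trans hN
  have hpowS := apply_pow_eq_mul_of_one_le_exponent hpow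
  have hmonoS : StrictMonoOn S (Set.Ici 1) := hmono.strictMonoOn _
  have hlog : Tendsto (fun n : ℕ => (m n : ℝ) / n) atTop (𝓝 (Real.log N / Real.log 2)) := by
    simpa using tendsto_div_of_pow_bracket
      (fun a k _ => by rw [Nat.cast_pow, Real.log_pow]) strictMonoOn_log_natCast hN1 hm
  have hS := tendsto_div_of_pow_bracket hpowS hmonoS hN1 hm
  refine ⟨hlog, ?_⟩
  rw [← tendsto_nhds_unique hS hlog, mul_div_cancel₀ _ (apply_two_pos hpowS hmonoS).ne']
end

section
/- Let ρ be a density matrix with rational eigenvalues r_j = m_j/n (j = 1,…,ℓ, ∑ m_j = n), with orthonormal eigenvectors φ_j. Let Ω be the normalized projection onto the span of all product vectors φ_{j(1)} ⊗ ⋯ ⊗ φ_{j(n)} in H^⊗n in which each φ_j appears exactly m_j times. Then every single-site partial trace of Ω equals ρ. -/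
open Matrix

/-- Insert the value `a` at site `k` into a configuration on the other sites. -/
def embedAt {n d : ℕ} (k : Fin n) (g : {i : Fin n // i ≠ k} → Fin d) (a : Fin d) :
    Fin n → Fin d :=
  fun i => if h : i = k then a else g ⟨i, h⟩

/-- The single-site partial trace at site `k`. -/
noncomputable def ptrace {n d : ℕ} (k : Fin n) (Ω : Matrix (Fin n → Fin d) (Fin n → Fin d) ℂ) :
    Matrix (Fin d) (Fin d) ℂ :=
  fun a b => ∑ g : {i : Fin n // i ≠ k} → Fin d, Ω (embedAt k g a) (embedAt k g b)

open Finset in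

-- fiber counts preserved under precomposition with a permutation
private lemma card_fiber_comp_perm {n ℓ : ℕ} (f : Fin n → Fin ℓ) (σ : Equiv.Perm (Fin n)) (j : Fin ℓ) :
    (univ.filter fun k => f (σ k) = j).card = (univ.filter fun k => f k = j).card := by
  apply Finset.card_bij' (fun k _ => σ k) (fun k _ => σ.symm k)
  · intro k hk; simp_all
  · intro k hk; simp_all
  · intro k hk; simp
  · intro k hk; simp

open Finset in
private lemma card_configs {n ℓ : ℕ} (m : Fin ℓ → ℕ) (hm : ∑ j, m j = n) :
    (Finset.univ.filter (fun f : Fin n → Fin ℓ =>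
      ∀ j, (Finset.univ.filter fun k => f k = j).card = m j)).card
      = Nat.multinomial Finset.univ m := by
  classical
  set S := Finset.univ.filter (fun f : Fin n → Fin ℓ =>
      ∀ j, (Finset.univ.filter fun k => f k = j).card = m j) with hS
  -- a reference configuration
  have hcard : Fintype.card (Σ j : Fin ℓ, Fin (m j)) = Fintype.card (Fin n) := by
    simp [Fintype.card_sigma, hm]
  let e : (Σ j : Fin ℓ, Fin (m j)) ≃ Fin n := Fintype.equivOfCardEq hcard
  let f₀ : Fin n → Fin ℓ := fun k => (e.symm k).1
  have hf₀card : ∀ j, Fintype.card {k // f₀ k = j} = m j := by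
    intro j
    have e1 : {k // f₀ k = j} ≃ {p : Σ j' : Fin ℓ, Fin (m j') // p.1 = j} :=
      (e.symm.subtypeEquiv (fun k => Iff.rfl))
    have e2 : {p : Σ j' : Fin ℓ, Fin (m j') // p.1 = j} ≃ Fin (m j) :=
      { toFun := fun p => Fin.cast (by rw [p.2]) p.1.2
        invFun := fun x => ⟨⟨j, x⟩, rfl⟩
        left_inv := by rintro ⟨⟨j', x⟩, h⟩; subst h; rfl
        right_inv := fun x => rfl }
    rw [Fintype.card_congr (e1.trans e2), Fintype.card_fin]
  have hf₀filter : ∀ j, (Finset.univ.filter fun k => f₀ k = j).card = m j := by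
    intro j; rw [← hf₀card j, Fintype.card_subtype]
  have hf₀S : f₀ ∈ S := by simp [hS, hf₀filter]
  -- any member of S is f₀ ∘ σ for some permutation σ
  have hsurj : ∀ g ∈ S, ∃ σ : Equiv.Perm (Fin n), f₀ ∘ σ = g := by
    intro g hg
    have hgfib : ∀ j, Fintype.card {k // g k = j} = Fintype.card {k // f₀ k = j} := by
      intro j
      rw [Fintype.card_subtype, Fintype.card_subtype, hf₀filter j]
      exact (Finset.mem_filter.mp hg).2 j
    let ψ : ∀ j, {k // g k = j} ≃ {k // f₀ k = j} := fun j => Fintype.equivOfCardEq (hgfib j)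
    refine ⟨(Equiv.sigmaFiberEquiv g).symm.trans
      ((Equiv.sigmaCongrRight ψ).trans (Equiv.sigmaFiberEquiv f₀)), ?_⟩
    funext x
    exact (ψ (g x) ⟨x, rfl⟩).2
  -- membership: f₀ ∘ σ ∈ S for all σ
  have hmem : ∀ σ : Equiv.Perm (Fin n), (f₀ ∘ σ) ∈ S := by
    intro σ
    simp only [hS, Finset.mem_filter, Finset.mem_univ, true_and]
    intro j
    simp only [Function.comp_apply]
    rw [card_fiber_comp_perm f₀ σ j]
    exact hf₀filter j
  -- each fiber of σ ↦ f₀ ∘ σ over S has the cardinality of the stabilizer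
  have hstab : Fintype.card {σ : Equiv.Perm (Fin n) // f₀ ∘ σ = f₀} = ∏ j, Nat.factorial (m j) := by
    rw [DomMulAct.stabilizer_card f₀]
    exact Finset.prod_congr rfl fun j _ => by rw [hf₀card j]
  have hfiber : ∀ g ∈ S, (univ.filter fun σ : Equiv.Perm (Fin n) => f₀ ∘ σ = g).card
      = ∏ j, Nat.factorial (m j) := by
    intro g hg
    obtain ⟨σg, hσg⟩ := hsurj g hg
    rw [← hstab, Fintype.card_subtype]
    apply Finset.card_bij' (fun σ _ => σ * σg⁻¹) (fun τ _ => τ * σg)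
    · intro σ hσ
      simp only [Finset.mem_filter, Finset.mem_univ, true_and] at hσ ⊢
      funext x
      simp only [Function.comp_apply, Equiv.Perm.mul_apply]
      rw [show f₀ (σ (σg⁻¹ x)) = g (σg⁻¹ x) from congrFun hσ _]
      rw [show g (σg⁻¹ x) = f₀ (σg (σg⁻¹ x)) from (congrFun hσg _).symm]
      simp
    · intro τ hτ
      simp only [Finset.mem_filter, Finset.mem_univ, true_and] at hτ ⊢
      funext x
      simp only [Function.comp_apply, Equiv.Perm.mul_apply]
      rw [show f₀ (τ (σg x)) = f₀ (σg x) from congrFun hτ _]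
      exact congrFun hσg x
    · intro σ _; simp [mul_assoc]
    · intro τ _; simp [mul_assoc]
  -- double counting
  have hcount : Nat.factorial n = S.card * ∏ j, Nat.factorial (m j) := by
    have h1 : (univ : Finset (Equiv.Perm (Fin n))).card
        = ∑ g ∈ S, (univ.filter fun σ : Equiv.Perm (Fin n) => f₀ ∘ σ = g).card :=
      Finset.card_eq_sum_card_fiberwise (fun σ _ => hmem σ)
    rw [Finset.card_univ, Fintype.card_perm, Fintype.card_fin] at h1
    rw [h1, Finset.sum_congr rfl hfiber, Finset.sum_const, smul_eq_mul]
  have hspec := Nat.multinomial_spec Finset.univ m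
  rw [hm] at hspec
  have hpos : 0 < ∏ j, Nat.factorial (m j) := Finset.prod_pos fun j _ => Nat.factorial_pos _
  apply Nat.eq_of_mul_eq_mul_left hpos
  rw [mul_comm, ← hcount]
  exact hspec.symm

open Finset in

/-- The marginals of the combinatorially constructed QLB state: with `ρ` having rational
eigenvalues `mⱼ/n` and orthonormal eigenvectors `φⱼ`, and `Ω` the normalized projection
onto the span of all product vectors in which each `φⱼ` appears exactly `mⱼ` times,
every single-site partial trace of `Ω` equals `ρ`. -/
theorem qlb_marginals {d n ℓ : ℕ} (hn : 0 < n)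
    (φ : Fin ℓ → EuclideanSpace ℂ (Fin d)) (hφ : Orthonormal ℂ φ)
    (m : Fin ℓ → ℕ) (hm : ∑ j, m j = n)
    (ρ : Matrix (Fin d) (Fin d) ℂ)
    (hρ : ∀ a b, ρ a b = ∑ j, ((m j : ℂ) / n) * φ j a * starRingEnd ℂ (φ j b))
    (Ω : Matrix (Fin n → Fin d) (Fin n → Fin d) ℂ)
    (hΩ : ∀ x y, Ω x y =
      (1 / (Nat.multinomial Finset.univ m : ℂ)) *
        ∑ f ∈ Finset.univ.filter
            (fun f : Fin n → Fin ℓ =>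
              ∀ j, (Finset.univ.filter fun k => f k = j).card = m j),
          ∏ k, (φ (f k) (x k) * starRingEnd ℂ (φ (f k) (y k)))) :
    ∀ k : Fin n, ptrace k Ω = ρ := by
  classical
  intro k
  set S := Finset.univ.filter
      (fun f : Fin n → Fin ℓ =>
        ∀ j, (Finset.univ.filter fun k => f k = j).card = m j) with hSdef
  set N : ℂ := (Nat.multinomial Finset.univ m : ℂ) with hNdef
  have hN0 : N ≠ 0 := by
    simp only [hNdef, ne_eq, Nat.cast_eq_zero]
    exact (Nat.multinomial_pos _ _).ne'
  have hn0 : (n : ℂ) ≠ 0 := Nat.cast_ne_zero.mpr hn.ne'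
  ext a b
  set h : Fin ℓ → ℂ := fun j => φ j a * starRingEnd ℂ (φ j b) with hhdef
  -- normalization of each eigenvector
  have hone : ∀ j : Fin ℓ, ∑ c : Fin d, φ j c * starRingEnd ℂ (φ j c) = 1 := by
    intro j
    have h1 := (orthonormal_iff_ite.mp hφ) j j
    rw [if_pos rfl] at h1
    rw [← h1, PiLp.inner_apply]
    exact Finset.sum_congr rfl fun c _ => by
      rw [RCLike.inner_apply, mul_comm]
  -- contracting the other sites
  have hsplit : ∀ f : Fin n → Fin ℓ,
      ∑ g : {i : Fin n // i ≠ k} → Fin d,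
        ∏ k', (φ (f k') (embedAt k g a k') * starRingEnd ℂ (φ (f k') (embedAt k g b k')))
      = h (f k) := by
    intro f
    have hsp : ∀ g : {i : Fin n // i ≠ k} → Fin d,
        (∏ k', (φ (f k') (embedAt k g a k') * starRingEnd ℂ (φ (f k') (embedAt k g b k'))))
        = h (f k) *
          ∏ i : {i : Fin n // i ≠ k}, (φ (f i) (g i) * starRingEnd ℂ (φ (f i) (g i))) := by
      intro g
      rw [← Finset.mul_prod_erase univ _ (Finset.mem_univ k)]
      congr 1
      · simp only [hhdef]
        rw [show embedAt k g a k = a from dif_pos rfl,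
          show embedAt k g b k = b from dif_pos rfl]
      · rw [Finset.prod_subtype (univ.erase k)
          (fun i => by simp [Finset.mem_erase]  : ∀ i, i ∈ univ.erase k ↔ i ≠ k)
          (fun i => (φ (f i) (embedAt k g a i) * starRingEnd ℂ (φ (f i) (embedAt k g b i))))]
        refine Finset.prod_congr rfl fun i _ => ?_
        obtain ⟨i, hik⟩ := i
        show φ (f i) (embedAt k g a i) * _ = _
        rw [show embedAt k g a i = g ⟨i, hik⟩ from dif_neg hik,
          show embedAt k g b i = g ⟨i, hik⟩ from dif_neg hik]
    rw [Finset.sum_congr rfl fun g _ => hsp g, ← Finset.mul_sum]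
    have : ∑ g : {i : Fin n // i ≠ k} → Fin d,
        ∏ i : {i : Fin n // i ≠ k}, (φ (f i) (g i) * starRingEnd ℂ (φ (f i) (g i))) = 1 := by
      rw [← Fintype.prod_sum (κ := fun _ : {i : Fin n // i ≠ k} => Fin d)
        (fun i c => (φ (f i) c * starRingEnd ℂ (φ (f i) c)))]
      simp [hone]
    rw [this, mul_one]
  -- the partial trace in contracted form
  have hpt : ptrace k Ω a b = (1 / N) * ∑ f ∈ S, h (f k) := by
    unfold ptrace
    rw [Finset.sum_congr rfl fun g _ => hΩ (embedAt k g a) (embedAt k g b), ← Finset.mul_sum,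
      Finset.sum_comm]
    rw [Finset.sum_congr rfl fun f _ => hsplit f]
  -- symmetry between the sites
  have hswap : ∀ k' : Fin n, ∑ f ∈ S, h (f k') = ∑ f ∈ S, h (f k) := by
    intro k'
    apply Finset.sum_nbij' (fun f => f ∘ Equiv.swap k k') (fun f => f ∘ Equiv.swap k k')
    · intro f hf
      simp only [hSdef, Finset.mem_filter, Finset.mem_univ, true_and] at hf ⊢
      intro j
      simp only [Function.comp_apply]
      rw [card_fiber_comp_perm f (Equiv.swap k k') j]
      exact hf j
    · intro f hf
      simp only [hSdef, Finset.mem_filter, Finset.mem_univ, true_and] at hf ⊢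
      intro j
      simp only [Function.comp_apply]
      rw [card_fiber_comp_perm f (Equiv.swap k k') j]
      exact hf j
    · intro f _; funext x; simp [Function.comp]
    · intro f _; funext x; simp [Function.comp]
    · intro f _
      simp [Equiv.swap_apply_left]
  -- summing over all sites
  have hfib : ∀ f ∈ S, ∑ k' : Fin n, h (f k') = ∑ j, (m j : ℂ) * h j := by
    intro f hf
    rw [← Finset.sum_fiberwise' univ f h]
    refine Finset.sum_congr rfl fun j _ => ?_
    rw [Finset.sum_const, (Finset.mem_filter.mp hf).2 j, nsmul_eq_mul]
  have hsum : (n : ℂ) * (∑ f ∈ S, h (f k)) = (S.card : ℂ) * ∑ j, (m j : ℂ) * h j := by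
    have h1 : ∑ k' : Fin n, ∑ f ∈ S, h (f k') = (n : ℂ) * ∑ f ∈ S, h (f k) := by
      rw [Finset.sum_congr rfl fun k' _ => hswap k', Finset.sum_const, Finset.card_univ,
        Fintype.card_fin, nsmul_eq_mul]
    rw [← h1, Finset.sum_comm, Finset.sum_congr rfl hfib, Finset.sum_const, nsmul_eq_mul]
  -- conclusion
  have hcardS : (S.card : ℂ) = N := by
    rw [hNdef, hSdef]
    norm_cast
    exact card_configs m hm
  rw [hpt, hρ a b]
  have hF : ∑ f ∈ S, h (f k) = (N / n) * ∑ j, (m j : ℂ) * h j := by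
    have h2 := hsum
    rw [hcardS] at h2
    field_simp
    linear_combination h2
  rw [hF]
  rw [Finset.mul_sum, Finset.mul_sum]
  refine Finset.sum_congr rfl fun j _ => ?_
  simp only [hhdef]
  field_simp
end
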